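/- arXiv:1809.01634 — 3 statements merged into one kernel-verified Lean document; each statement's English description precedes it below -/
import Mathlib

section
/- Let G be a countable group, A and B finite sets, ν a shift-invariant Borel probability measure on B^G, and π : B^G → A^G a measurable equivariant map. Then for every ε > 0 there exists a cellular map π_ε : B^G → A^G such that ν({ y ∈ B^G : (π(y))(1_G) ≠ (π_ε(y))(1_G) }) < ε. -/
open Filter MeasureTheory
open scoped Pointwise Classical

namespace Brudno

noncomputable section

/-- Complexity of a binary string `x` relative to a partial function `f` :
the minimal length of a `y` with `f y = x`. -/
def CF (f : List Bool →. List Bool) (x : List Bool) : ℕ :=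
  sInf { n | ∃ y : List Bool, y.length = n ∧ x ∈ f y }

/-- `u` is an optimal partial computable machine: it is partial computable, and for
every partial computable `f` there is a constant `K` with `C_u x ≤ C_f x + K` for all `x`. -/
def Optimal (u : List Bool →. List Bool) : Prop :=
  Partrec u ∧ ∀ f : List Bool →. List Bool, Partrec f →
    ∃ K : ℕ, ∀ x y : List Bool, x ∈ f y → CF u x ≤ y.length + K

/-- Kolmogorov complexity of a natural number (relative to the machine `u`),
via the binary representation. -/
def KC (u : List Bool →. List Bool) (n : ℕ) : ℕ := CF u (Nat.bits n)

/-- A fixed computable injective encoding of finite subsets of `ℕ` into `ℕ`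
(hence into binary strings). -/
def encFinsetNat (F : Finset ℕ) : ℕ := Encodable.encode (F.sort (· ≤ ·))

variable {G A B : Type}

/-- Encoding of a finite subset of `G`, where `G` has underlying set `ℕ` via `e`. -/
def encFinset (e : G ≃ ℕ) (F : Finset G) : ℕ := encFinsetNat (F.image e)

/-- The group multiplication is computable on the underlying set `ℕ`. -/
def ComputableMul [Group G] (e : G ≃ ℕ) : Prop :=
  Computable₂ fun m n : ℕ => e (e.symm m * e.symm n)

/-- A Følner sequence: a sequence of (nonempty) finite subsets with
`|gFᵢ \ Fᵢ| / |Fᵢ| → 0` for every `g ∈ G`. -/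
def IsFolner [Group G] (F : ℕ → Finset G) : Prop :=
  (∀ i, (F i).Nonempty) ∧
    ∀ g : G,
      Tendsto (fun i => (((F i).image (fun h => g * h) \ F i).card : ℝ) / ((F i).card : ℝ))
        atTop (nhds 0)

/-- A tempered sequence: `|⋃_{j<i} Fⱼ⁻¹ Fᵢ| ≤ K |Fᵢ|` for all `i`. -/
def Tempered [Group G] (F : ℕ → Finset G) : Prop :=
  ∃ K : ℝ, 0 < K ∧
    ∀ i : ℕ, ((((Finset.range i).biUnion fun j => (F j)⁻¹ * F i)).card : ℝ) ≤ K * ((F i).card : ℝ)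

/-- A modest sequence: `C(Fᵢ)/|Fᵢ| → 0`. -/
def Modest (u : List Bool →. List Bool) (e : G ≃ ℕ) (F : ℕ → Finset G) : Prop :=
  Tendsto (fun i => (KC u (encFinset e (F i)) : ℝ) / ((F i).card : ℝ)) atTop (nhds 0)

/-- The shift action of `G` on `A^G`: `(g • x) h = x (h * g)`. -/
def shift [Group G] (g : G) (x : G → A) : G → A := fun h => x (h * g)

/-- A fixed computable injective encoding of the restriction of `x : G → A` to a finite
subset `F ⊆ G` (a partial map with finite domain), listing the domain in increasing
order of the ℕ-codes. -/
def encRestrict [Encodable A] (e : G ≃ ℕ) (F : Finset G) (x : G → A) : ℕ :=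
  Encodable.encode
    (((F.image e).sort (· ≤ ·)).map fun n => (n, Encodable.encode (x (e.symm n))))

/-- Upper asymptotic complexity of `x ∈ A^G` relative to the sequence `F`. -/
def uac [Encodable A] (u : List Bool →. List Bool) (e : G ≃ ℕ) (F : ℕ → Finset G)
    (x : G → A) : ℝ :=
  limsup (fun i => (KC u (encRestrict e (F i) x) : ℝ) / ((F i).card : ℝ)) atTop

/-- Lower asymptotic complexity of `x ∈ A^G` relative to the sequence `F`. -/
def lac [Encodable A] (u : List Bool →. List Bool) (e : G ≃ ℕ) (F : ℕ → Finset G)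
    (x : G → A) : ℝ :=
  liminf (fun i => (KC u (encRestrict e (F i) x) : ℝ) / ((F i).card : ℝ)) atTop

/-- The product topology on `A^G`, `A` being discrete. -/
def prodiscrete (G A : Type) : TopologicalSpace (G → A) :=
  @Pi.topologicalSpace G (fun _ => A) fun _ => ⊥

/-- The Borel σ-algebra of the prodiscrete topology on `A^G`. -/
def prodisBorel (G A : Type) : MeasurableSpace (G → A) := @borel (G → A) (prodiscrete G A)

/-- A subshift: a closed shift-invariant subset of `A^G`. -/
def IsSubshift [Group G] (X : Set (G → A)) : Prop :=
  @IsClosed (G → A) (prodiscrete G A) X ∧ ∀ g : G, ∀ x ∈ X, shift g x ∈ X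

/-- The number of distinct restrictions to `F` of elements of `X`, i.e. `|pr_F(X)|`. -/
def projCount (F : Finset G) (X : Set (G → A)) : ℕ :=
  Nat.card ↥((fun (x : G → A) (g : ↥F) => x ↑g) '' X)

/-- Shannon entropy (base 2) of the join partition `α^F` (whose atoms are the
cylinders over the finite set `F`), for the measure `μ`. -/
def Hjoin [Fintype A] (μ : @Measure (G → A) (prodisBorel G A)) (F : Finset G) : ℝ :=
  -∑ w : ↥F → A,
      (μ {x : G → A | ∀ g : ↥F, x ↑g = w g}).toReal *
        Real.logb 2 (μ {x : G → A | ∀ g : ↥F, x ↑g = w g}).toReal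

/-- Shannon entropy (base 2) of the canonical alphabet partition. -/
def Halpha [Group G] [Fintype A] (μ : @Measure (G → A) (prodisBorel G A)) : ℝ :=
  -∑ a : A, (μ {x : G → A | x 1 = a}).toReal * Real.logb 2 (μ {x : G → A | x 1 = a}).toReal

/-- `cont` of the restriction of `x` to `F`: the word of values of `x` on `F`,
listed in increasing order of the ℕ-codes of the elements of `F`. -/
def contWord (e : G ≃ ℕ) (F : Finset G) (x : G → A) : List A :=
  ((F.image e).sort (· ≤ ·)).map fun n => x (e.symm n)

/-- A fixed computable injective encoding of words over `A`. -/
def encWord [Encodable A] (w : List A) : ℕ := Encodable.encode w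

/-- Frequency of the letter `a` in the word `w`. -/
def freq (w : List A) (a : A) : ℝ :=
  ((w.filter fun b => decide (b = a)).length : ℝ) / (w.length : ℝ)

/-- Shannon entropy (base 2) of the letter-frequency vector of the word `w`. -/
def wordEntropy [Fintype A] (w : List A) : ℝ :=
  -∑ a : A, freq w a * Real.logb 2 (freq w a)

/-- The binary entropy function `H(p, 1-p)`. -/
def Hbin (p : ℝ) : ℝ := -(p * Real.logb 2 p) - (1 - p) * Real.logb 2 (1 - p)

/-- Normalized Hamming distance between two words (of the same length). -/
def hammingDist (w w' : List A) : ℝ :=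
  (((w.zip w').filter fun p => decide (p.1 ≠ p.2)).length : ℝ) / (w.length : ℝ)

end

/-!
For `G` countable and `B` finite, the Borel σ-algebra of `B^G` is the product σ-algebra, which
is generated by the algebra of cylinder sets; for a finite measure, cylinders are therefore
measure-dense. Approximating each fibre `{y | π(y)(1) = a}` by a cylinder over a common finite
`M ⊆ G` yields a local rule `τ : B^M → A` agreeing with `y ↦ π(y)(1)` off a set of measure
`< ε`, and `π_ε` is the cellular map with rule `τ`.
-/

theorem prodisBorel_eq_pi (G C : Type) [Countable G] [Finite C] :
    prodisBorel G C = @MeasurableSpace.pi G (fun _ => C) (fun _ => ⊤) := by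
  let : TopologicalSpace C := ⊥
  have : DiscreteTopology C := ⟨rfl⟩
  let : MeasurableSpace C := ⊤
  have : BorelSpace C := ⟨borel_eq_top_of_discrete.symm⟩
  exact (Pi.borelSpace (X := fun _ : G => C)).measurable_eq.symm

section CylinderApproximation

variable {ι : Type*} {X : ι → Type*} [∀ i, MeasurableSpace (X i)]
  (μ : Measure (∀ i, X i)) [IsFiniteMeasure μ]

theorem exists_finset_forall_measure_symmDiff_cylinder_lt {A : Type*} [Finite A]
    {s : A → Set (∀ i, X i)} (hs : ∀ a, MeasurableSet (s a)) {δ : ℝ} (hδ : 0 < δ) :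
    ∃ (M : Finset ι) (T : A → Set (∀ i : M, X i)),
      ∀ a, μ (symmDiff (s a) (cylinder M (T a))) < ENNReal.ofReal δ := by
  have := Fintype.ofFinite A
  have hdense := Measure.MeasureDense.of_generateFrom_isSetAlgebra_finite μ
    isSetAlgebra_measurableCylinders generateFrom_measurableCylinders.symm
  choose t ht hst using fun a => hdense.approx (s a) (hs a) (measure_ne_top μ _) δ hδ
  choose I S _ hI using fun a => (mem_measurableCylinders (t a)).1 (ht a)
  have hIM : ∀ a, I a ⊆ Finset.univ.biUnion I :=
    fun a => Finset.subset_biUnion_of_mem I (Finset.mem_univ a)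
  refine ⟨Finset.univ.biUnion I, fun a => Finset.restrict₂ (hIM a) ⁻¹' S a, fun a => ?_⟩
  rw [cylinder, ← Set.preimage_comp, Finset.restrict₂_comp_restrict, ← cylinder, ← hI a]
  exact hst a

theorem setOf_ne_epsilon_subset_iUnion_symmDiff {Y W A : Type*} [Nonempty A]
    (f : Y → A) (p : Y → W) (T : A → Set W) :
    {y | f y ≠ Classical.epsilon fun a => p y ∈ T a} ⊆
      ⋃ a, symmDiff (f ⁻¹' {a}) (p ⁻¹' T a) := by
  intro y hy
  by_cases hyT : p y ∈ T (f y)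
  · have hspec := Classical.epsilon_spec (p := fun a => p y ∈ T a) ⟨f y, hyT⟩
    exact Set.mem_iUnion.2 ⟨_, Or.inr ⟨hspec, hy⟩⟩
  · exact Set.mem_iUnion.2 ⟨f y, Or.inl ⟨rfl, hyT⟩⟩

theorem exists_finset_measure_ne_comp_restrict_lt {A : Type*} [Finite A] [Nonempty A]
    [MeasurableSpace A] [MeasurableSingletonClass A] {f : (∀ i, X i) → A} (hf : Measurable f)
    {ε : ℝ} (hε : 0 < ε) :
    ∃ (M : Finset ι) (τ : (∀ i : M, X i) → A),
      μ {y | f y ≠ τ (M.restrict y)} < ENNReal.ofReal ε := by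
  have := Fintype.ofFinite A
  have hcard : (0 : ℝ) < Fintype.card A := by exact_mod_cast Fintype.card_pos
  obtain ⟨M, T, hT⟩ := exists_finset_forall_measure_symmDiff_cylinder_lt μ
    (fun a => hf (measurableSet_singleton a)) (div_pos hε hcard)
  refine ⟨M, fun w => Classical.epsilon fun a => w ∈ T a, ?_⟩
  calc μ {y | f y ≠ Classical.epsilon fun a => M.restrict y ∈ T a}
      ≤ μ (⋃ a, symmDiff (f ⁻¹' {a}) (cylinder M (T a))) :=
        measure_mono (setOf_ne_epsilon_subset_iUnion_symmDiff f M.restrict T)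
    _ ≤ ∑ a, μ (symmDiff (f ⁻¹' {a}) (cylinder M (T a))) := measure_iUnion_fintype_le μ _
    _ < ∑ _a : A, ENNReal.ofReal (ε / Fintype.card A) :=
        ENNReal.sum_lt_sum_of_nonempty Finset.univ_nonempty fun a _ => hT a
    _ = ENNReal.ofReal ε := by
        rw [Finset.sum_const, Finset.card_univ, nsmul_eq_mul, ← ENNReal.ofReal_natCast,
          ← ENNReal.ofReal_mul (Nat.cast_nonneg _), mul_div_cancel₀ _ hcard.ne']

end CylinderApproximation

section CellularMap

variable {G A B : Type} [Group G]

theorem shift_one (y : G → B) : shift 1 y = y :=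
  funext fun h => congrArg y (mul_one h)

theorem shift_shift (g h : G) (y : G → B) : shift h (shift g y) = shift (h * g) y :=
  funext fun k => congrArg y (mul_assoc k h g)

/-- The unique equivariant map whose generator map `y ↦ (π y)(1)` is `τ ∘ pr_M`. -/
def cellularMap (M : Finset G) (τ : (M → B) → A) (y : G → B) : G → A :=
  fun h => τ (M.restrict (shift h y))

theorem cellularMap_shift (M : Finset G) (τ : (M → B) → A) (g : G) (y : G → B) :
    cellularMap M τ (shift g y) = shift g (cellularMap M τ y) :=
  funext fun h => by simp only [cellularMap, shift_shift]; rfl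

theorem cellularMap_apply_one (M : Finset G) (τ : (M → B) → A) (y : G → B) :
    cellularMap M τ y 1 = τ (M.restrict y) := by
  rw [cellularMap, shift_one]

end CellularMap

theorem statement9_general {G A B : Type} [Group G] [Countable G] [Fintype A] [Fintype B]
    (ν : @Measure (G → B) (prodisBorel G B)) (hν1 : ν Set.univ = 1)
    (π : (G → B) → (G → A))
    (hmeas : @Measurable _ _ (prodisBorel G B) (prodisBorel G A) π)
    (ε : ℝ) (hε : 0 < ε) :
    ∃ πε : (G → B) → (G → A),
      (∀ (g : G) (y : G → B), πε (shift g y) = shift g (πε y)) ∧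
      (∃ (M : Finset G) (τ : (↥M → B) → A), ∀ y : G → B, πε y 1 = τ fun m : ↥M => y ↑m) ∧
      ν {y : G → B | π y 1 ≠ πε y 1} < ENNReal.ofReal ε := by
  let : MeasurableSpace A := ⊤
  let : MeasurableSpace B := ⊤
  -- the σ-algebras occur in the types of `ν` and `hmeas`, so they are rewritten under binders
  revert ν π
  rw [prodisBorel_eq_pi G B, prodisBorel_eq_pi G A]
  intro ν hν1 π hmeas
  have : IsProbabilityMeasure ν := ⟨hν1⟩
  have : Nonempty A := by
    obtain ⟨y⟩ := MeasureTheory.nonempty_of_isProbabilityMeasure ν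
    exact ⟨π y 1⟩
  have : MeasurableSingletonClass A := ⟨fun _ => trivial⟩
  have hπ1 : Measurable fun y => π y 1 := (measurable_pi_apply 1).comp hmeas
  obtain ⟨M, τ, hτ⟩ := exists_finset_measure_ne_comp_restrict_lt ν hπ1 hε
  refine ⟨cellularMap M τ, cellularMap_shift M τ, ⟨M, τ, cellularMap_apply_one M τ⟩, ?_⟩
  simpa only [cellularMap_apply_one] using hτ

/-- **cellular approximation.** Any measurable equivariant map
`π : B^G → A^G`, with respect to a shift-invariant Borel probability measure `ν` on
`B^G`, can be approximated by a cellular map `π_ε` so that the set where the generator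
maps differ has measure `< ε`. -/
theorem statement9 {G A B : Type} [Group G] [Countable G] [Fintype A] [Fintype B]
    (ν : @Measure (G → B) (prodisBorel G B)) (hν1 : ν Set.univ = 1)
    (hinv : ∀ g : G, @Measure.map _ _ (prodisBorel G B) (prodisBorel G B) (shift g) ν = ν)
    (π : (G → B) → (G → A))
    (hmeas : @Measurable _ _ (prodisBorel G B) (prodisBorel G A) π)
    (hequi : ∀ (g : G) (y : G → B), π (shift g y) = shift g (π y))
    (ε : ℝ) (hε : 0 < ε) :
    ∃ πε : (G → B) → (G → A),
      (∀ (g : G) (y : G → B), πε (shift g y) = shift g (πε y)) ∧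
      (∃ (M : Finset G) (τ : (↥M → B) → A), ∀ y : G → B, πε y 1 = τ fun m : ↥M => y ↑m) ∧
      ν {y : G → B | π y 1 ≠ πε y 1} < ENNReal.ofReal ε :=
  statement9_general ν hν1 π hmeas ε hε

end Brudno
end

section
/- Let A be a finite set. For every ε > 0 there exists N such that for every word w ∈ A^* with |w| ≥ N, C(w) ≤ |w| · (H(p(w)) + ε), where p(w) is the probability vector of letter frequencies of w and H(p) = -∑_{a∈A} p_a log₂ p_a. -/
open Filter MeasureTheory
open scoped Pointwise Classical

namespace Brudno

/-!
A word `w` of length `n` is determined by its vector `c` of letter counts together with its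
index `k` in the list of words with the same counts (its type class). Weight every word of
length `n` by `∏ᵢ p(xᵢ)`, where `p` is the letter-frequency vector of `w`: all words together
weigh `(∑ₐ pₐ)ⁿ = 1`, and every member of the type class weighs `2^(-n H(p))`. Hence the class
has at most `2^(n H(p))` elements and `k` has at most `n H(p) + 1` bits. The counts are at most
`n`, so `c` has a code of `O(log n)` bits, and a fixed computable decoder recovers `w` from the
self-delimiting concatenation of the two codes; optimality of `u` then gives
`C(w) ≤ n H(p(w)) + O(log n)`.
-/

open Encodable Asymptotics

def ofBits (l : List Bool) : ℕ := Nat.ofDigits 2 (l.map fun b => cond b 1 0)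

theorem ofBits_bits (n : ℕ) : ofBits n.bits = n := by
  rw [ofBits, ← Nat.digits_two_eq_bits, Nat.ofDigits_digits]

theorem primrec_ofBits : Primrec ofBits :=
  (Primrec.list_foldr .id (.const 0) (Primrec.nat_add.comp
    (Primrec.cond (Primrec.fst.comp .snd) (.const 1) (.const 0))
    (Primrec.nat_mul.comp (.const 2) (Primrec.snd.comp .snd))).to₂).of_eq fun l => by
    induction l with
    | nil => rfl
    | cons b l ih =>
      simp only [id, ofBits] at ih ⊢
      simp [ih, Nat.ofDigits_cons]

theorem bits_eq_bodd_cons {n : ℕ} (hn : n ≠ 0) : n.bits = n.bodd :: (n / 2).bits := by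
  have hne : n.bits ≠ [] := by
    rwa [← List.length_pos_iff, Nat.size_eq_bits_len, Nat.size_pos, Nat.pos_iff_ne_zero]
  obtain ⟨b, l, h⟩ := List.exists_cons_of_ne_nil hne
  rw [Nat.bodd_eq_bits_head, ← Nat.div2_val, Nat.div2_bits_eq_tail, h]
  rfl

theorem primrec_bits : Primrec Nat.bits := by
  have : Primrec₂ fun (_ : Unit) (n : ℕ) => n.bits := by
    refine Primrec.nat_strong_rec _ (g := fun _ l => if l.length = 0 then some [] else
        l[l.length / 2]?.map (l.length.bodd :: ·)) ?_ fun _ n => ?_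
    · exact Primrec.ite (Primrec.eq.comp (Primrec.list_length.comp .snd) (.const 0)) (.const _)
        (Primrec.option_map (Primrec.list_getElem?.comp .snd
          (Primrec.nat_div.comp (Primrec.list_length.comp .snd) (.const 2)))
          (Primrec.list_cons.comp (Primrec.nat_bodd.comp
            (Primrec.list_length.comp (Primrec.snd.comp .fst))) .snd).to₂)
    · rcases eq_or_ne n 0 with rfl | hn
      · simp
      · simp [hn, bits_eq_bodd_cons hn, Nat.div_lt_self (Nat.pos_of_ne_zero hn)]
  exact this.comp (.const ()) .id

def pairBits (a b : ℕ) : List Bool := List.replicate a.size false ++ true :: (a.bits ++ b.bits)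

def unpairBits (y : List Bool) : ℕ × ℕ :=
  let t := y.findIdx id
  (ofBits ((y.drop (t + 1)).take t), ofBits ((y.drop (t + 1)).drop t))

theorem length_pairBits (a b : ℕ) : (pairBits a b).length = 2 * a.size + 1 + b.size := by
  simp only [pairBits, ← Nat.size_eq_bits_len, List.length_append, List.length_replicate,
    List.length_cons]
  omega

theorem unpairBits_pairBits (a b : ℕ) : unpairBits (pairBits a b) = (a, b) := by
  have hfind : (pairBits a b).findIdx id = a.size := by
    rw [pairBits, List.findIdx_append, List.findIdx_eq_length.2 (by simp)]
    simp [List.findIdx_cons]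
  have hdrop : (pairBits a b).drop (a.size + 1) = a.bits ++ b.bits := by
    rw [pairBits, ← List.length_replicate (n := a.size) (a := false), List.drop_append]
    simp
  have hsize := Nat.size_eq_bits_len a
  simp only [unpairBits, hfind, hdrop, List.take_left' hsize, List.drop_left' hsize, ofBits_bits]

theorem primrec_unpairBits : Primrec unpairBits := by
  have ht : Primrec fun y : List Bool => y.findIdx id :=
    Primrec.list_findIdx .id (Primrec.snd.to₂)
  have hr : Primrec fun y : List Bool => y.drop (y.findIdx id + 1) :=
    Primrec.list_drop.comp (Primrec.succ.comp ht) .id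
  exact Primrec.pair (primrec_ofBits.comp (Primrec.list_take.comp ht hr))
    (primrec_ofBits.comp (Primrec.list_drop.comp ht hr))

theorem size_le_logb_add_one (m : ℕ) : (m.size : ℝ) ≤ Real.logb 2 m + 1 := by
  rcases eq_or_ne m 0 with rfl | hm
  · simp
  have hsize : 1 ≤ m.size := Nat.size_pos.2 (Nat.pos_of_ne_zero hm)
  have hlog : m.size - 1 ≤ Nat.log 2 m :=
    Nat.le_log_of_pow_le one_lt_two (Nat.lt_size.1 (by omega))
  have := (Nat.cast_le (α := ℝ)).2 hlog
  have := Real.natLog_le_logb m 2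
  push_cast [Nat.cast_sub hsize] at *
  linarith

theorem isLittleO_size_add (c : ℕ) :
    (fun n : ℕ => ((n + c).size : ℝ)) =o[atTop] (fun n => (n : ℝ)) := by
  have hconst (a : ℝ) : (fun _ : ℕ => a) =o[atTop] (fun n => (n : ℝ)) :=
    (isLittleO_const_id_atTop a).comp_tendsto tendsto_natCast_atTop_atTop
  have hlog : (fun n : ℕ => Real.log ((n : ℝ) + c)) =o[atTop] (fun n => (n : ℝ)) :=
    (Real.isLittleO_log_id_atTop.comp_tendsto
      (tendsto_atTop_add_const_right _ _ tendsto_natCast_atTop_atTop)).trans_isBigO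
      ((isBigO_refl _ _).add (hconst _).isBigO)
  refine IsBigO.trans_isLittleO (IsBigO.of_bound 1 (Eventually.of_forall fun n => ?_))
    ((hlog.const_mul_left (Real.log 2)⁻¹).add (hconst 1))
  have h := size_le_logb_add_one (n + c)
  have h0 : 0 ≤ Real.logb 2 ((n : ℝ) + c) := by
    rcases Nat.eq_zero_or_pos (n + c) with h | h
    · simp_all
    · exact Real.logb_nonneg one_lt_two (by exact_mod_cast h)
  push_cast at h
  rw [Real.logb, div_eq_inv_mul] at h h0
  rw [Real.norm_of_nonneg (by positivity), Real.norm_of_nonneg (by positivity), one_mul]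
  exact h

section Sections

variable {α : Type}

theorem primrec_sections [Primcodable α] : Primrec (@List.sections α) :=
  (Primrec.list_foldr .id (.const [[]]) (Primrec.list_flatMap (Primrec.snd.comp .snd)
    (Primrec.list_map (Primrec.fst.comp (Primrec.snd.comp .fst))
      (Primrec.list_cons.comp .snd (Primrec.snd.comp .fst)).to₂).to₂).to₂).of_eq fun L => by
    induction L with
    | nil => rfl
    | cons l L ih => simp only [id] at ih ⊢; simp [List.sections, ih]

theorem mem_sections_replicate {l u : List α} {n : ℕ} :
    u ∈ (List.replicate n l).sections ↔ u.length = n ∧ ∀ x ∈ u, x ∈ l := by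
  rw [List.mem_sections]
  induction n generalizing u with
  | zero => simp +contextual [List.length_eq_zero_iff]
  | succ n ih => cases u <;> simp [List.replicate_succ, ih, and_left_comm]

theorem sum_map_prod_sections {R : Type} [CommSemiring R] (L : List (List α)) (q : α → R) :
    (L.sections.map fun u => (u.map q).prod).sum = (L.map fun l => (l.map q).sum).prod := by
  induction L with
  | nil => simp [List.sections]
  | cons l L ih =>
    simp only [List.sections, List.flatMap, List.map_flatten, List.map_map, List.sum_flatten,
      List.map_cons, List.prod_cons, ← ih, ← List.sum_map_mul_left]
    congr 1
    refine List.map_congr_left fun s _ => ?_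
    simp [Function.comp_def, List.sum_map_mul_right]

end Sections

section TypeClass

variable {α : Type} [DecidableEq α]

def counts (l u : List α) : List ℕ := l.map u.count

def typeClass (l : List α) (c : List ℕ) : List (List α) :=
  (List.replicate c.sum l).sections.filter (counts l · = c)

variable {l u v : List α}

theorem sum_counts (hl : l.Nodup) (hv : ∀ x ∈ v, x ∈ l) : (counts l v).sum = v.length := by
  rw [counts, ← List.sum_toFinset _ hl, ← List.sum_toFinset_count_eq_length]
  refine (Finset.sum_subset (fun x hx => List.mem_toFinset.2 (hv x (List.mem_toFinset.1 hx)))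
    fun x _ hx => List.count_eq_zero.2 (by simpa using hx)).symm

theorem mem_typeClass_counts (hl : l.Nodup) (hv : ∀ x ∈ v, x ∈ l) :
    v ∈ typeClass l (counts l v) := by
  simpa [typeClass, sum_counts hl hv, mem_sections_replicate] using hv

theorem perm_of_mem_typeClass_counts (hv : ∀ x ∈ v, x ∈ l)
    (hu : u ∈ typeClass l (counts l v)) : u.Perm v := by
  rw [typeClass, List.mem_filter, mem_sections_replicate] at hu
  obtain ⟨⟨-, hul⟩, hc⟩ := hu
  have hc : ∀ x ∈ l, u.count x = v.count x := by simpa [counts] using hc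
  refine List.perm_iff_count.2 fun x => ?_
  by_cases hx : x ∈ l
  · exact hc x hx
  · rw [List.count_eq_zero.2 fun h => hx (hul x h), List.count_eq_zero.2 fun h => hx (hv x h)]

theorem length_typeClass_mul_prod_le (hl : l.Nodup) (hv : ∀ x ∈ v, x ∈ l) {q : α → ℝ}
    (hq : ∀ x, 0 ≤ q x) (hsum : (l.map q).sum ≤ 1) :
    (typeClass l (counts l v)).length * (v.map q).prod ≤ 1 := by
  set S := typeClass l (counts l v)
  have hweight : ∀ u ∈ S, (u.map q).prod = (v.map q).prod := fun u hu =>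
    ((perm_of_mem_typeClass_counts hv hu).map q).prod_eq
  have hsub : S.Sublist (List.replicate v.length l).sections := by
    rw [← sum_counts hl hv]; exact List.filter_sublist
  calc S.length * (v.map q).prod = (S.map fun u => (u.map q).prod).sum := by
        rw [List.map_congr_left hweight]; simp
    _ ≤ ((List.replicate v.length l).sections.map fun u => (u.map q).prod).sum :=
        (hsub.map _).sum_le_sum fun _ hx => by
          obtain ⟨u, -, rfl⟩ := List.mem_map.1 hx
          exact List.prod_nonneg (by simp [hq])
    _ = (l.map q).sum ^ v.length := by simp [sum_map_prod_sections]
    _ ≤ 1 := pow_le_one₀ (List.sum_nonneg (by simp [hq])) hsum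

theorem primrec_typeClass [Primcodable α] (l : List α) : Primrec (typeClass l) := by
  have hcount : Primrec₂ fun (u : List α) (x : α) => u.count x :=
    (Primrec.list_length.comp₂ (PrimrecRel.listFilter Primrec.eq)).of_eq fun u x => by
      rw [List.count_eq_countP, List.countP_eq_length_filter]; rfl
  have hcounts : Primrec (counts l) := Primrec.list_map (.const l) hcount
  have hsum : Primrec fun c : List ℕ => c.sum :=
    (Primrec.list_foldr .id (.const 0)
      (Primrec.nat_add.comp (Primrec.fst.comp .snd) (Primrec.snd.comp .snd)).to₂).of_eq
      fun c => by simp [List.sum_eq_foldr]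
  have hreplicate : Primrec fun n => List.replicate n l :=
    (Primrec.list_map Primrec.list_range (Primrec.const l).to₂).of_eq fun n => by
      simp [List.map_const']
  have hrel : PrimrecRel fun u c => counts l u = c := Primrec.eq.comp (hcounts.comp .fst) .snd
  exact (PrimrecRel.listFilter hrel).comp (primrec_sections.comp (hreplicate.comp hsum)) Primrec.id

end TypeClass

section Entropy

variable {A : Type}

theorem freq_eq_count (w : List A) (a : A) : freq w a = w.count a / w.length := by
  rw [freq, List.count_eq_countP, List.countP_eq_length_filter]
  rfl

theorem count_eq_length_mul_freq (w : List A) (a : A) :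
    (w.count a : ℝ) = w.length * freq w a := by
  rcases eq_or_ne w.length 0 with h | h
  · simp [List.length_eq_zero_iff.1 h]
  · rw [freq_eq_count]
    field_simp

theorem freq_pow_count (w : List A) (a : A) :
    freq w a ^ w.count a = (2 : ℝ) ^ (w.count a * Real.logb 2 (freq w a)) := by
  rcases eq_or_ne (w.count a) 0 with h | h
  · simp [h]
  have hpos : 0 < freq w a := by
    rw [freq_eq_count]
    have : 0 < w.length := List.length_pos_of_mem (List.count_pos_iff.1 (Nat.pos_of_ne_zero h))
    positivity
  rw [mul_comm, Real.rpow_mul_natCast zero_le_two, Real.rpow_logb two_pos (by norm_num) hpos]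

theorem prod_map_freq [Fintype A] (w : List A) :
    (w.map (freq w)).prod = 2 ^ (-(w.length * wordEntropy w)) := by
  rw [Finset.prod_list_map_count, Finset.prod_subset (Finset.subset_univ _)
    fun a _ ha => by rw [List.count_eq_zero_of_not_mem (by simpa using ha), pow_zero]]
  simp_rw [freq_pow_count, count_eq_length_mul_freq]
  rw [← Real.rpow_sum_of_pos two_pos, wordEntropy, mul_neg, neg_neg, Finset.mul_sum]
  simp_rw [mul_assoc]

end Entropy

theorem encode_lt_pow {M : ℕ} (hM : 2 ≤ M) {l : List ℕ} (hl : ∀ x ∈ l, x < M) :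
    encode l < M ^ 3 ^ l.length := by
  induction l with
  | nil => simp only [encode_list_nil, List.length_nil, pow_zero, pow_one]; omega
  | cons x l ih =>
    set P := 3 ^ l.length
    have hP : 0 < P := by positivity
    have hx : x + 1 ≤ M ^ P :=
      (hl x List.mem_cons_self).trans_le (Nat.le_self_pow hP.ne' M)
    have hl' : encode l + 1 ≤ M ^ P := ih fun y hy => hl y (List.mem_cons_of_mem x hy)
    calc encode (x :: l) = Nat.pair x (encode l) + 1 := by simp [encode_list_cons]
      _ ≤ (max x (encode l) + 1) ^ 2 := Nat.pair_lt_max_add_one_sq x (encode l)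
      _ ≤ (M ^ P) ^ 2 := Nat.pow_le_pow_left (by omega) 2
      _ = M ^ (2 * P) := by ring
      _ < M ^ 3 ^ (x :: l).length :=
        Nat.pow_lt_pow_right hM (by rw [List.length_cons, pow_succ]; omega)

theorem size_encode_le {M : ℕ} (hM : 2 ≤ M) {l : List ℕ} (hl : ∀ x ∈ l, x < M) :
    (encode l).size ≤ M.size * 3 ^ l.length :=
  Nat.size_le.2 <| (encode_lt_pow hM hl).trans_le <| by
    rw [pow_mul]; exact Nat.pow_le_pow_left (Nat.lt_size_self M).le _

def typeDecoder (l : List ℕ) (y : List Bool) : Option (List Bool) :=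
  ((decode (α := List ℕ) (unpairBits y).1).bind fun c => (typeClass l c)[(unpairBits y).2]?).map
    fun v => (encode v).bits

theorem computable_typeDecoder (l : List ℕ) : Computable (typeDecoder l) :=
  Primrec.to_comp <| Primrec.option_map
    (Primrec.option_bind (Primrec.decode.comp (Primrec.fst.comp primrec_unpairBits))
      (Primrec.list_getElem?.comp ((primrec_typeClass l).comp .snd)
        (Primrec.snd.comp (primrec_unpairBits.comp .fst))).to₂)
    (primrec_bits.comp (Primrec.encode.comp .snd)).to₂

theorem typeDecoder_pairBits {l c v : List ℕ} (hv : v ∈ typeClass l c) :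
    typeDecoder l (pairBits (encode c) ((typeClass l c).idxOf v)) = some (encode v).bits := by
  simp [typeDecoder, unpairBits_pairBits, List.getElem?_idxOf hv]

theorem Optimal.exists_CF_le {u : List Bool →. List Bool} (hu : Optimal u)
    {g : List Bool → Option (List Bool)} (hg : Computable g) :
    ∃ K : ℕ, ∀ y x, g y = some x → CF u x ≤ y.length + K := by
  obtain ⟨K, hK⟩ := hu.2 _ (Computable.ofOption hg)
  exact ⟨K, fun y x h => hK x y (by simp [h])⟩

theorem encode_map_encode {A : Type} [Encodable A] (w : List A) :
    encode (w.map encode) = encode w := by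
  induction w with
  | nil => rfl
  | cons a w ih => simp [encode_list_cons, ih]

noncomputable def letterCodes (A : Type) [Fintype A] [Encodable A] : List ℕ :=
  (Finset.univ : Finset A).toList.map encode

section Words

variable {A : Type} [Fintype A] [Encodable A]

theorem nodup_letterCodes : (letterCodes A).Nodup :=
  (Finset.nodup_toList _).map encode_injective

theorem encode_mem_letterCodes (a : A) : encode a ∈ letterCodes A := by
  simp [letterCodes]

theorem length_letterCodes : (letterCodes A).length = Fintype.card A := by
  simp [letterCodes]

theorem length_typeClass_le (w : List A) :
    ((typeClass (letterCodes A) (counts (letterCodes A) (w.map encode))).length : ℝ) ≤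
      2 ^ (w.length * wordEntropy w) := by
  set l := letterCodes A
  set v := w.map encode
  have hv : ∀ x ∈ v, x ∈ l := by simp [v, l, encode_mem_letterCodes]
  set q : ℕ → ℝ := fun x => v.count x / w.length
  have hsum : (l.map q).sum ≤ 1 := by
    have : (l.map q).sum = ((counts l v).sum : ℝ) / w.length := by
      simp [counts, q, div_eq_mul_inv, List.sum_map_mul_right, Nat.cast_list_sum,
        Function.comp_def]
    rw [this, sum_counts nodup_letterCodes hv, List.length_map]
    exact div_self_le_one _
  have hprod : (v.map q).prod = 2 ^ (-(w.length * wordEntropy w)) := by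
    rw [List.map_map, ← prod_map_freq]
    refine congrArg _ (List.map_congr_left fun a _ => ?_)
    simp [q, v, List.count_map_of_injective _ _ encode_injective, freq_eq_count]
  have := length_typeClass_mul_prod_le nodup_letterCodes hv (fun x => by positivity) hsum
  rwa [hprod, Real.rpow_neg zero_le_two, ← div_eq_mul_inv, div_le_one (by positivity)] at this

theorem size_encode_counts_le (w : List A) :
    (encode (counts (letterCodes A) (w.map encode))).size ≤
      (w.length + 2).size * 3 ^ Fintype.card A := by
  have hlen : (counts (letterCodes A) (w.map encode)).length = Fintype.card A := by
    simp [counts, length_letterCodes]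
  refine hlen ▸ size_encode_le (by omega) fun x hx => ?_
  obtain ⟨y, -, rfl⟩ := List.mem_map.1 hx
  have := List.count_le_length (a := y) (l := w.map encode)
  rw [List.length_map] at this
  omega

theorem size_idxOf_typeClass_le {w : List A} {v : List ℕ}
    (hv : v ∈ typeClass (letterCodes A) (counts (letterCodes A) (w.map encode))) :
    (((typeClass (letterCodes A) (counts (letterCodes A) (w.map encode))).idxOf v).size : ℝ) ≤
      w.length * wordEntropy w + 1 := by
  set S := typeClass (letterCodes A) (counts (letterCodes A) (w.map encode))
  have hlt := List.idxOf_lt_length_of_mem hv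
  have hS : (0 : ℝ) < S.length := by exact_mod_cast (Nat.zero_le _).trans_lt hlt
  calc ((S.idxOf v).size : ℝ) ≤ S.length.size := by exact_mod_cast Nat.size_le_size hlt.le
    _ ≤ Real.logb 2 S.length + 1 := size_le_logb_add_one _
    _ ≤ w.length * wordEntropy w + 1 := by
      gcongr
      exact (Real.logb_le_iff_le_rpow one_lt_two hS).2 (length_typeClass_le w)

theorem exists_KC_encWord_le {u : List Bool →. List Bool} (hu : Optimal u) :
    ∃ K : ℕ, ∀ w : List A, (KC u (encWord w) : ℝ) ≤
      w.length * wordEntropy w + (2 * 3 ^ Fintype.card A * (w.length + 2).size + (K + 2)) := by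
  obtain ⟨K, hK⟩ := hu.exists_CF_le (computable_typeDecoder (letterCodes A))
  refine ⟨K, fun w => ?_⟩
  have hv : ∀ x ∈ w.map encode, x ∈ letterCodes A := by simp [encode_mem_letterCodes]
  have hmem := mem_typeClass_counts nodup_letterCodes hv
  have hdec := typeDecoder_pairBits hmem
  rw [encode_map_encode] at hdec
  have hKC : KC u (encWord w) ≤ _ := hK _ _ hdec
  rw [length_pairBits] at hKC
  have hKC' := (Nat.cast_le (α := ℝ)).2 hKC
  have hc := (Nat.cast_le (α := ℝ)).2 (size_encode_counts_le w)
  push_cast at hKC' hc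
  linarith [size_idxOf_typeClass_le hmem]

end Words

/-- **Shannon-type bound for complexity of words.** For every `ε > 0`
there is `N` such that every word `w` over the finite alphabet `A` of length at least `N`
satisfies `C(w) ≤ |w| (H(p(w)) + ε)`, where `p(w)` is the letter-frequency vector. -/
theorem statement11 {A : Type} [Fintype A] [Encodable A]
    (u : List Bool →. List Bool) (hu : Optimal u)
    (ε : ℝ) (hε : 0 < ε) :
    ∃ N : ℕ, ∀ w : List A, N ≤ w.length →
      (KC u (encWord w) : ℝ) ≤ (w.length : ℝ) * (wordEntropy w + ε) := by
  obtain ⟨K, hK⟩ := exists_KC_encWord_le (A := A) hu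
  have hoverhead := ((isLittleO_size_add 2).const_mul_left (2 * 3 ^ Fintype.card A : ℝ)).add
    ((isLittleO_const_id_atTop ((K : ℝ) + 2)).comp_tendsto tendsto_natCast_atTop_atTop)
  obtain ⟨N, hN⟩ := eventually_atTop.1 (hoverhead.bound hε)
  refine ⟨N, fun w hw => ?_⟩
  have h := (Real.le_norm_self _).trans (hN w.length hw)
  rw [Real.norm_natCast] at h
  simp only [Function.comp_apply] at h
  calc (KC u (encWord w) : ℝ)
      ≤ w.length * wordEntropy w + (2 * 3 ^ Fintype.card A * (w.length + 2).size + (K + 2)) :=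
        hK w
    _ ≤ w.length * (wordEntropy w + ε) := by linarith

end Brudno
end

section
/- Let G be a countable amenable group, A and B finite sets, π' and π'' two measurable equivariant maps B^G → A^G, and μ an ergodic shift-invariant Borel probability measure on B^G. Let W := { y ∈ B^G : (π'(y))(1_G) ≠ (π''(y))(1_G) } and let 𝓕 = (F_i) be a tempered Følner sequence. Then for μ-almost every y ∈ B^G, dh_𝓕(π'(y), π''(y)) = μ(W); in fact, limsup_i |{ g ∈ F_i : (π'(y))(g) ≠ (π''(y))(g) }| / |F_i| = μ(W), with the limsup being a genuine limit. -/
open Filter MeasureTheory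
open scoped Pointwise Classical

namespace Brudno

/-!
The frequency of disagreement of `π' y` and `π'' y` on `F i` is the Følner average, along the
orbit of `y`, of the indicator of `W`, so the theorem is Lindenstrauss' pointwise ergodic theorem
for tempered Følner sequences, applied to that indicator.

That theorem is proved in the classical way. Coboundaries `h ∘ (s • ·) - h` of bounded `h` have
averages tending to zero everywhere, and by ergodicity they span a dense subspace of the mean-zero
part of `L²`: a function orthogonal to all of them is invariant, hence constant. The remaining
`L¹`-small error is controlled by a maximal inequality, transferred from a covering lemma on the
group: selecting tiles `F i * d` from the largest scale down, each center is charged either to the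
mass of the selected tiles of its own scale or, through temperedness, to the shadow of a selected
tile of larger scale.
-/

open scoped Finset ENNReal Topology

section Covering

variable {G : Type*} [Group G] {F : ℕ → Finset G} {i : ℕ} {a : G → ℝ} {lam C : ℝ}

noncomputable def tile (F : ℕ → Finset G) (i : ℕ) (d : G) : Finset G := (F i).image (· * d)

noncomputable def tiles (F : ℕ → Finset G) (idx : G → ℕ) (E : Finset G) : Finset G :=
  E.biUnion fun d => tile F (idx d) d

noncomputable def shadow (F : ℕ → Finset G) (i : ℕ) : Finset G :=
  (Finset.range i).biUnion fun j => (F j)⁻¹ * F i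

lemma sum_tile (d : G) : ∑ g ∈ tile F i d, a g = ∑ f ∈ F i, a (f * d) :=
  Finset.sum_image fun _ _ _ _ h => mul_right_cancel h

lemma card_filter_mem_tile_le (S : Finset G) (g : G) : #{d ∈ S | g ∈ tile F i d} ≤ #(F i) := by
  refine (Finset.card_le_card fun d hd => ?_).trans (Finset.card_image_le (f := fun f => f⁻¹ * g))
  obtain ⟨f, hf, rfl⟩ := Finset.mem_image.mp (Finset.mem_filter.mp hd).2
  exact Finset.mem_image.mpr ⟨f, hf, by group⟩

/-- Each point lies in at most `#(F i)` tiles of scale `i`. -/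
lemma sum_sum_tile_inter_le (ha : ∀ g, 0 ≤ a g) (S U : Finset G) :
    ∑ d ∈ S, ∑ g ∈ tile F i d ∩ U, a g ≤ #(F i) * ∑ g ∈ U, a g := by
  calc ∑ d ∈ S, ∑ g ∈ tile F i d ∩ U, a g
      = ∑ g ∈ U, #{d ∈ S | g ∈ tile F i d} * a g := by
        simp_rw [Finset.inter_comm _ U, ← Finset.filter_mem_eq_inter, Finset.sum_filter]
        rw [Finset.sum_comm]
        simp only [Finset.sum_ite, Finset.sum_const, nsmul_eq_mul, mul_zero, add_zero]
    _ ≤ ∑ g ∈ U, #(F i) * a g := by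
        refine Finset.sum_le_sum fun g _ => mul_le_mul_of_nonneg_right ?_ (ha g)
        exact_mod_cast card_filter_mem_tile_le S g
    _ = #(F i) * ∑ g ∈ U, a g := (Finset.mul_sum ..).symm

lemma mem_shadow {j : ℕ} {d d' g : G} (hj : j < i) (hd : g ∈ tile F j d) (hd' : g ∈ tile F i d') :
    d ∈ (shadow F i).image (· * d') := by
  obtain ⟨f, hf, rfl⟩ := Finset.mem_image.mp hd
  obtain ⟨f', hf', hff'⟩ := Finset.mem_image.mp hd'
  refine Finset.mem_image.mpr ⟨f⁻¹ * f', ?_, ?_⟩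
  · exact Finset.mem_biUnion.mpr ⟨j, Finset.mem_range.mpr hj,
      Finset.mul_mem_mul (Finset.inv_mem_inv hf) hf'⟩
  · rw [mul_assoc, hff', ← mul_assoc, inv_mul_cancel, one_mul]

lemma half_le_sum_tile_inter {D : Finset G} {d : G} (hd : d ∉ D)
    (hD : lam / 2 * #(F i) * #D ≤ ∑ g ∈ D.biUnion (tile F i), a g)
    (hdD : ¬lam / 2 * #(F i) * #(insert d D) ≤ ∑ g ∈ (insert d D).biUnion (tile F i), a g)
    (hbig : lam * #(F i) < ∑ g ∈ tile F i d, a g) :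
    lam / 2 * #(F i) ≤ ∑ g ∈ tile F i d ∩ D.biUnion (tile F i), a g := by
  have hunion := Finset.sum_union_inter (s₁ := tile F i d) (s₂ := D.biUnion (tile F i)) (f := a)
  rw [Finset.biUnion_insert, Finset.card_insert_of_notMem hd] at hdD
  push_cast at hdD
  linarith

lemma card_heavy_tiles_le (ha : ∀ g, 0 ≤ a g) (hFi : (F i).Nonempty) (S U : Finset G) :
    lam / 2 * #{d ∈ S | lam / 2 * #(F i) ≤ ∑ g ∈ tile F i d ∩ U, a g} ≤ ∑ g ∈ U, a g := by
  set H := {d ∈ S | lam / 2 * #(F i) ≤ ∑ g ∈ tile F i d ∩ U, a g}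
  have hpos : (0 : ℝ) < #(F i) := by exact_mod_cast hFi.card_pos
  have h : #H * (lam / 2 * #(F i)) ≤ #(F i) * ∑ g ∈ U, a g :=
    calc #H * (lam / 2 * #(F i)) ≤ ∑ d ∈ H, ∑ g ∈ tile F i d ∩ U, a g := by
          simpa using Finset.card_nsmul_le_sum H _ _ fun d hd => (Finset.mem_filter.mp hd).2
      _ ≤ ∑ d ∈ S, ∑ g ∈ tile F i d ∩ U, a g :=
          Finset.sum_le_sum_of_subset_of_nonneg (Finset.filter_subset _ S) fun d _ _ =>
            Finset.sum_nonneg fun g _ => ha g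
      _ ≤ #(F i) * ∑ g ∈ U, a g := sum_sum_tile_inter_le ha S U
  nlinarith

lemma card_filter_not_disjoint_le (E D : Finset G) (idx : G → ℕ) :
    #{d ∈ E | idx d < i ∧ ¬Disjoint (tile F (idx d) d) (D.biUnion (tile F i))}
      ≤ #D * #(shadow F i) := by
  calc _ ≤ #(D.biUnion fun d' => (shadow F i).image (· * d')) := by
        refine Finset.card_le_card fun d hd => ?_
        obtain ⟨-, hlt, hmeet⟩ := Finset.mem_filter.mp hd
        obtain ⟨g, hg, hg'⟩ := Finset.not_disjoint_iff.mp hmeet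
        obtain ⟨d', hd', hgd'⟩ := Finset.mem_biUnion.mp hg'
        exact Finset.mem_biUnion.mpr ⟨d', hd', mem_shadow hlt hg hgd'⟩
    _ ≤ ∑ d' ∈ D, #((shadow F i).image (· * d')) := Finset.card_biUnion_le
    _ ≤ ∑ _d' ∈ D, #(shadow F i) := Finset.sum_le_sum fun _ _ => Finset.card_image_le
    _ = #D * #(shadow F i) := by rw [Finset.sum_const, smul_eq_mul]

lemma nonneg_of_card_shadow_le (hFi : (F i).Nonempty) (hC : (#(shadow F i) : ℝ) ≤ C * #(F i)) :
    0 ≤ C :=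
  nonneg_of_mul_nonneg_left ((Nat.cast_nonneg _).trans hC) (by exact_mod_cast hFi.card_pos)

lemma exists_maximal_massive {E : Finset G} {idx : G → ℕ}
    (hbig : ∀ d ∈ E, idx d = i → lam * #(F i) < ∑ g ∈ tile F i d, a g) :
    ∃ D ⊆ E, (∀ d ∈ D, idx d = i) ∧ lam / 2 * #(F i) * #D ≤ ∑ g ∈ D.biUnion (tile F i), a g ∧
      ∀ d ∈ E, idx d = i → d ∉ D →
        lam / 2 * #(F i) ≤ ∑ g ∈ tile F i d ∩ D.biUnion (tile F i), a g := by
  set massive : Finset G → Prop :=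
    fun D => lam / 2 * #(F i) * #D ≤ ∑ g ∈ D.biUnion (tile F i), a g
  obtain ⟨D, -, hmax⟩ := Finset.exists_le_maximal
    ({d ∈ E | idx d = i}.powerset.filter massive) (a := ∅) (by simp [massive])
  obtain ⟨hDE, hD⟩ := Finset.mem_filter.mp hmax.1
  rw [Finset.mem_powerset] at hDE
  refine ⟨D, hDE.trans (Finset.filter_subset _ E), fun d hd => (Finset.mem_filter.mp (hDE hd)).2,
    hD, fun d hdE hdi hdD => half_le_sum_tile_inter hdD hD (fun h => hdD ?_) (hbig d hdE hdi)⟩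
  exact hmax.2 (Finset.mem_filter.mpr ⟨Finset.mem_powerset.mpr
    (Finset.insert_subset (Finset.mem_filter.mpr ⟨hdE, hdi⟩) hDE), h⟩)
    (Finset.subset_insert d D) (Finset.mem_insert_self d D)

/-- A center of scale `i` is either selected or puts mass `λ/2 · #(F i)` on the selected tiles,
which cover each point at most `#(F i)` times; a center of lower scale whose tile meets a selected
tile `F i * d'` lies in `shadow F i * d'`, of size at most `C · #(F i)`. -/
theorem exists_scale_selection (hFi : (F i).Nonempty) (hC : (#(shadow F i) : ℝ) ≤ C * #(F i))
    (ha : ∀ g, 0 ≤ a g) (hlam : 0 < lam) (E : Finset G) (idx : G → ℕ)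
    (hbig : ∀ d ∈ E, idx d = i → lam * #(F i) < ∑ g ∈ tile F i d, a g) :
    ∃ D ⊆ E, (∀ d ∈ D, idx d = i) ∧
      lam * #{d ∈ E | idx d = i ∨ idx d < i ∧ ¬Disjoint (tile F (idx d) d) (D.biUnion (tile F i))}
        ≤ 2 * (C + 2) * ∑ g ∈ D.biUnion (tile F i), a g := by
  obtain ⟨D, hDE, hDi, hmass, hrej⟩ := exists_maximal_massive hbig
  refine ⟨D, hDE, hDi, ?_⟩
  set U := D.biUnion (tile F i)
  set heavy := {d ∈ E | lam / 2 * #(F i) ≤ ∑ g ∈ tile F i d ∩ U, a g}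
  set low := {d ∈ E | idx d < i ∧ ¬Disjoint (tile F (idx d) d) U}
  have hsplit : {d ∈ E | idx d = i ∨ idx d < i ∧ ¬Disjoint (tile F (idx d) d) U}
      ⊆ D ∪ heavy ∪ low := by
    intro d hd
    obtain ⟨hdE, hdi | hdlow⟩ := Finset.mem_filter.mp hd
    · by_cases hdD : d ∈ D
      · exact Finset.mem_union_left _ (Finset.mem_union_left _ hdD)
      · exact Finset.mem_union_left _
          (Finset.mem_union_right _ (Finset.mem_filter.mpr ⟨hdE, hrej d hdE hdi hdD⟩))
    · exact Finset.mem_union_right _ (Finset.mem_filter.mpr ⟨hdE, hdlow⟩)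
  have hcard : (#{d ∈ E | idx d = i ∨ idx d < i ∧ ¬Disjoint (tile F (idx d) d) U} : ℝ)
      ≤ #D + #heavy + #low := by
    exact_mod_cast (Finset.card_le_card hsplit).trans
      ((Finset.card_union_le _ _).trans (Nat.add_le_add_right (Finset.card_union_le D heavy) _))
  have hheavy : lam / 2 * #heavy ≤ ∑ g ∈ U, a g := card_heavy_tiles_le ha hFi E U
  have hlow : (#low : ℝ) ≤ #D * #(shadow F i) := by
    exact_mod_cast card_filter_not_disjoint_le E D idx
  have hF1 : (1 : ℝ) ≤ #(F i) := by exact_mod_cast hFi.card_pos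
  have hC0 := nonneg_of_card_shadow_le hFi hC
  have hD0 : (0 : ℝ) ≤ #D := Nat.cast_nonneg _
  nlinarith [mul_le_mul_of_nonneg_left hC hD0, mul_le_mul_of_nonneg_left hF1 hD0,
    mul_le_mul_of_nonneg_left hmass hC0]

theorem mul_card_le_sum_tiles (hF : ∀ i, (F i).Nonempty)
    (hC : ∀ i, (#(shadow F i) : ℝ) ≤ C * #(F i))
    (ha : ∀ g, 0 ≤ a g) (hlam : 0 < lam) (idx : G → ℕ) (E : Finset G)
    (hbig : ∀ d ∈ E, lam * #(F (idx d)) < ∑ g ∈ tile F (idx d) d, a g) :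
    lam * #E ≤ 2 * (C + 2) * ∑ g ∈ tiles F idx E, a g := by
  obtain ⟨N, hN⟩ : ∃ N, ∀ d ∈ E, idx d < N :=
    ⟨E.sup idx + 1, fun d hd => Nat.lt_succ_of_le (Finset.le_sup hd)⟩
  induction N generalizing E with
  | zero => simp [Finset.eq_empty_of_forall_notMem fun d hd => Nat.not_lt_zero _ (hN d hd), tiles]
  | succ N ih =>
    obtain ⟨D, hDE, hDidx, hsel⟩ := exists_scale_selection (hF N) (hC N) ha hlam E idx
      fun d hd hdi => hdi ▸ hbig d hd
    set U := D.biUnion (tile F N)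
    set p : G → Prop := fun d => idx d = N ∨ idx d < N ∧ ¬Disjoint (tile F (idx d) d) U
    have hrest : ∀ d ∈ E.filter (¬p ·), idx d < N ∧ Disjoint (tile F (idx d) d) U := by
      intro d hd
      obtain ⟨hdE, hdp⟩ := Finset.mem_filter.mp hd
      have := hN d hdE
      simp only [p, not_or, not_and, not_not] at hdp
      exact ⟨by omega, hdp.2 (by omega)⟩
    have ih' := ih (E.filter (¬p ·)) (fun d hd => hbig d (Finset.mem_filter.mp hd).1)
      fun d hd => (hrest d hd).1
    have hdisj : Disjoint U (tiles F idx (E.filter (¬p ·))) :=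
      (Finset.disjoint_biUnion_right _ _ _).mpr fun d hd => (hrest d hd).2.symm
    have hsub : U ∪ tiles F idx (E.filter (¬p ·)) ⊆ tiles F idx E := by
      refine Finset.union_subset (fun g hg => ?_) ?_
      · obtain ⟨d, hd, hgd⟩ := Finset.mem_biUnion.mp hg
        exact Finset.mem_biUnion.mpr ⟨d, hDE hd, hDidx d hd ▸ hgd⟩
      · exact Finset.biUnion_subset_biUnion_of_subset_left _ (Finset.filter_subset _ E)
    have hC0 := nonneg_of_card_shadow_le (hF 0) (hC 0)
    calc lam * #E = lam * #(E.filter p) + lam * #(E.filter (¬p ·)) := by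
          rw [← Finset.card_filter_add_card_filter_not p]; push_cast; ring
      _ ≤ 2 * (C + 2) * ∑ g ∈ U, a g + 2 * (C + 2) * ∑ g ∈ tiles F idx (E.filter (¬p ·)), a g :=
          add_le_add hsel ih'
      _ = 2 * (C + 2) * ∑ g ∈ U ∪ tiles F idx (E.filter (¬p ·)), a g := by
          rw [Finset.sum_union hdisj]; ring
      _ ≤ 2 * (C + 2) * ∑ g ∈ tiles F idx E, a g := by
          have := Finset.sum_le_sum_of_subset_of_nonneg hsub fun g _ _ => ha g
          exact mul_le_mul_of_nonneg_left this (by linarith)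

end Covering

section FolnerAverages

variable {G : Type} {X : Type*} [Group G] {F : ℕ → Finset G}

lemma IsFolner.eventually_card_mul_le (hF : IsFolner F) (K : Finset G) {ε : ℝ} (hε : 0 < ε) :
    ∀ᶠ m in atTop, (#(K * F m) : ℝ) ≤ (1 + ε) * #(F m) := by
  have hsmall : ∀ᶠ m in atTop,
      ∑ g ∈ K, (#((F m).image (g * ·) \ F m) : ℝ) / #(F m) < ε := by
    have := tendsto_finsetSum K fun g _ => hF.2 g
    rw [Finset.sum_const_zero] at this
    exact this.eventually (gt_mem_nhds hε)
  filter_upwards [hsmall] with m hm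
  have hpos : (0 : ℝ) < #(F m) := by exact_mod_cast (hF.1 m).card_pos
  have hsub : K * F m ⊆ F m ∪ K.biUnion fun g => (F m).image (g * ·) \ F m := by
    intro x hx
    obtain ⟨g, hg, h, hh, rfl⟩ := Finset.mem_mul.mp hx
    by_cases hgh : g * h ∈ F m
    · exact Finset.mem_union_left _ hgh
    · exact Finset.mem_union_right _ (Finset.mem_biUnion.mpr
        ⟨g, hg, Finset.mem_sdiff.mpr ⟨Finset.mem_image_of_mem _ hh, hgh⟩⟩)
  have hcard : (#(K * F m) : ℝ) ≤ #(F m) + ∑ g ∈ K, (#((F m).image (g * ·) \ F m) : ℝ) := by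
    exact_mod_cast (Finset.card_le_card hsub).trans
      ((Finset.card_union_le _ _).trans (Nat.add_le_add_left Finset.card_biUnion_le _))
  rw [← Finset.sum_div, div_lt_iff₀ hpos] at hm
  linarith

variable [MulAction G X] {φ ψ : X → ℝ} {i : ℕ} {x : X} {C lam : ℝ}

noncomputable def folnerAverage (F : ℕ → Finset G) (φ : X → ℝ) (i : ℕ) (x : X) : ℝ :=
  (∑ g ∈ F i, φ (g • x)) / #(F i)

lemma folnerAverage_add :
    folnerAverage F (fun y => φ y + ψ y) i x = folnerAverage F φ i x + folnerAverage F ψ i x := by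
  simp only [folnerAverage, Finset.sum_add_distrib, add_div]

lemma folnerAverage_sub :
    folnerAverage F (fun y => φ y - ψ y) i x = folnerAverage F φ i x - folnerAverage F ψ i x := by
  simp only [folnerAverage, Finset.sum_sub_distrib, sub_div]

lemma folnerAverage_const_mul (c : ℝ) :
    folnerAverage F (fun y => c * φ y) i x = c * folnerAverage F φ i x := by
  simp only [folnerAverage, ← Finset.mul_sum, mul_div_assoc]

lemma folnerAverage_const (hFi : (F i).Nonempty) (c : ℝ) :
    folnerAverage F (fun _ => c) i x = c := by
  have : (#(F i) : ℝ) ≠ 0 := by exact_mod_cast hFi.card_pos.ne'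
  simp [folnerAverage, this]

lemma abs_folnerAverage_le : |folnerAverage F φ i x| ≤ folnerAverage F (fun y => |φ y|) i x := by
  simp only [folnerAverage, abs_div, Nat.abs_cast]
  gcongr
  exact Finset.abs_sum_le_sum_abs _ _

/-- The sum over `F i` telescopes to sums over `s F i \ F i` and `F i \ s F i`. -/
lemma tendsto_folnerAverage_coboundary (hF : IsFolner F) {h : X → ℝ} {M : ℝ}
    (hh : ∀ x, |h x| ≤ M) (s : G) (x : X) :
    Tendsto (fun i => folnerAverage F (fun y => h (s • y) - h y) i x) atTop (𝓝 0) := by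
  refine squeeze_zero_norm (fun i => ?_)
    (by simpa only [mul_zero] using (hF.2 s).const_mul (2 * M))
  set sF := (F i).image (s * ·)
  have hpos : (0 : ℝ) < #(F i) := by exact_mod_cast (hF.1 i).card_pos
  have hsum : ∑ g ∈ F i, (h (s • g • x) - h (g • x))
      = ∑ g ∈ sF \ F i, h (g • x) - ∑ g ∈ F i \ sF, h (g • x) := by
    rw [Finset.sum_sdiff_sub_sum_sdiff, Finset.sum_sub_distrib,
      Finset.sum_image fun _ _ _ _ hg => mul_left_cancel hg]
    simp only [mul_smul]
  have hbound : ∀ t : Finset G, |∑ g ∈ t, h (g • x)| ≤ M * #t := fun t =>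
    (Finset.abs_sum_le_sum_abs _ _).trans
      ((Finset.sum_le_sum fun g _ => hh _).trans (by rw [Finset.sum_const, nsmul_eq_mul, mul_comm]))
  have hcard : #(F i \ sF) = #(sF \ F i) :=
    Finset.card_sdiff_comm (Finset.card_image_of_injective _ (mul_right_injective s)).symm
  rw [Real.norm_eq_abs, folnerAverage, abs_div, Nat.abs_cast, div_le_iff₀ hpos, hsum]
  calc _ ≤ M * #(sF \ F i) + M * #(F i \ sF) :=
        (abs_sub _ _).trans (add_le_add (hbound _) (hbound _))
    _ = 2 * M * (#(sF \ F i) / #(F i)) * #(F i) := by rw [hcard]; field_simp; ring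

/-- The transference step: the covering lemma applied along the orbit of `x`, with the tiles
`F i * d` read through `g ↦ φ (g • x)`. -/
lemma mul_card_filter_le_sum (hF : ∀ i, (F i).Nonempty)
    (hC : ∀ i, (#(shadow F i) : ℝ) ≤ C * #(F i)) (hφ : ∀ x, 0 ≤ φ x) (hlam : 0 < lam)
    (N m : ℕ) (x : X) :
    lam * #{d ∈ F m | ∃ i ≤ N, lam < folnerAverage F φ i (d • x)}
      ≤ 2 * (C + 2) * ∑ g ∈ (Finset.range (N + 1)).biUnion F * F m, φ (g • x) := by
  set E := {d ∈ F m | ∃ i ≤ N, lam < folnerAverage F φ i (d • x)}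
  choose! idx hidxN hidx using fun d (hd : d ∈ E) => (Finset.mem_filter.mp hd).2
  have hbig : ∀ d ∈ E, lam * #(F (idx d)) < ∑ g ∈ tile F (idx d) d, φ (g • x) := by
    intro d hd
    have h := hidx d hd
    rw [folnerAverage, lt_div_iff₀ (by exact_mod_cast (hF _).card_pos)] at h
    simpa [sum_tile, mul_smul, mul_comm] using h
  have hsub : tiles F idx E ⊆ (Finset.range (N + 1)).biUnion F * F m := by
    intro g hg
    obtain ⟨d, hd, hgd⟩ := Finset.mem_biUnion.mp hg
    obtain ⟨f, hf, rfl⟩ := Finset.mem_image.mp hgd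
    exact Finset.mul_mem_mul (Finset.mem_biUnion.mpr
      ⟨idx d, Finset.mem_range.mpr (Nat.lt_succ_of_le (hidxN d hd)), hf⟩)
      (Finset.mem_filter.mp hd).1
  have hC0 := nonneg_of_card_shadow_le (hF 0) (hC 0)
  calc lam * #E ≤ 2 * (C + 2) * ∑ g ∈ tiles F idx E, φ (g • x) :=
        mul_card_le_sum_tiles hF hC (fun g => hφ _) hlam idx E hbig
    _ ≤ _ := mul_le_mul_of_nonneg_left
        (Finset.sum_le_sum_of_subset_of_nonneg hsub fun g _ _ => hφ _) (by linarith)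

end FolnerAverages

section Maximal

variable {G : Type} {X : Type*} [Group G] {F : ℕ → Finset G} {C lam : ℝ}
  [MulAction G X] [MeasurableSpace X] [MeasurableConstSMul G X]
  {μ : Measure X} [SMulInvariantMeasure G X μ] {φ : X → ℝ}

lemma measurable_folnerAverage (hφ : Measurable φ) (i : ℕ) :
    Measurable (folnerAverage F φ i) :=
  (Finset.measurable_sum _ fun g _ => hφ.comp (measurable_const_smul g)).div_const _

lemma lintegral_card_filter_smul_mem {s : Set X} [DecidablePred (· ∈ s)] (hs : MeasurableSet s)
    (D : Finset G) :
    ∫⁻ x, (#{d ∈ D | d • x ∈ s} : ℝ≥0∞) ∂μ = #D * μ s := by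
  have hind : ∀ (d : G) x, (if d • x ∈ s then (1 : ℝ≥0∞) else 0)
      = ((d • ·) ⁻¹' s).indicator 1 x := fun d x => by simp [Set.indicator_apply]
  simp_rw [Finset.natCast_card_filter, hind]
  rw [lintegral_finsetSum D fun d _ => measurable_one.indicator (measurable_const_smul d hs)]
  simp [lintegral_indicator_one (measurable_const_smul _ hs), measure_preimage_smul]

lemma lintegral_sum_smul (hφm : Measurable φ) (hφ : ∀ x, 0 ≤ φ x) (D : Finset G) :
    ∫⁻ x, ENNReal.ofReal (∑ g ∈ D, φ (g • x)) ∂μ = #D * ∫⁻ x, ENNReal.ofReal (φ x) ∂μ := by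
  simp_rw [ENNReal.ofReal_sum_of_nonneg fun g _ => hφ _]
  rw [lintegral_finsetSum D fun g _ => ?_]
  · simp [(measurePreserving_smul _ μ).lintegral_comp hφm.ennreal_ofReal]
  · exact (hφm.comp (measurable_const_smul g)).ennreal_ofReal

lemma le_of_forall_le_ofReal_one_add_mul {a b : ℝ≥0∞}
    (h : ∀ n : ℕ, a ≤ ENNReal.ofReal (1 + 1 / (n + 1)) * b) : a ≤ b := by
  have hlim : Tendsto (fun n : ℕ => ENNReal.ofReal (1 + 1 / (n + 1)) * b) atTop (𝓝 b) := by
    simpa using ENNReal.Tendsto.mul_const (ENNReal.tendsto_ofReal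
      (tendsto_one_div_add_atTop_nhds_zero_nat.const_add 1)) (Or.inl (by simp))
  exact ge_of_tendsto' hlim h

lemma measurableSet_exists_le_lt_folnerAverage (hφm : Measurable φ) (N : ℕ) :
    MeasurableSet {x | ∃ i ≤ N, lam < folnerAverage F φ i x} := by
  have : {x | ∃ i ≤ N, lam < folnerAverage F φ i x}
      = ⋃ i ∈ Finset.range (N + 1), {x | lam < folnerAverage F φ i x} := by
    ext; simp
  rw [this]
  exact Finset.measurableSet_biUnion _ fun i _ =>
    measurableSet_lt measurable_const (measurable_folnerAverage hφm i)

lemma card_mul_maximal_measure_le (hF : ∀ i, (F i).Nonempty)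
    (hC : ∀ i, (#(shadow F i) : ℝ) ≤ C * #(F i)) (hφm : Measurable φ) (hφ : ∀ x, 0 ≤ φ x)
    (hlam : 0 < lam) (N m : ℕ) :
    (#(F m) : ℝ≥0∞) * (ENNReal.ofReal lam * μ {x | ∃ i ≤ N, lam < folnerAverage F φ i x})
      ≤ #((Finset.range (N + 1)).biUnion F * F m) *
        (ENNReal.ofReal (2 * (C + 2)) * ∫⁻ x, ENNReal.ofReal (φ x) ∂μ) := by
  have hc : 0 ≤ 2 * (C + 2) := by linarith [nonneg_of_card_shadow_le (hF 0) (hC 0)]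
  calc _ = ∫⁻ x, ENNReal.ofReal (lam *
        #{d ∈ F m | d • x ∈ {y | ∃ i ≤ N, lam < folnerAverage F φ i y}}) ∂μ := by
        simp_rw [ENNReal.ofReal_mul hlam.le, ENNReal.ofReal_natCast]
        rw [lintegral_const_mul' _ _ ENNReal.ofReal_ne_top,
          lintegral_card_filter_smul_mem (measurableSet_exists_le_lt_folnerAverage hφm N)]
        ring
    _ ≤ ∫⁻ x, ENNReal.ofReal
          (2 * (C + 2) * ∑ g ∈ (Finset.range (N + 1)).biUnion F * F m, φ (g • x)) ∂μ :=
        lintegral_mono fun x =>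
          ENNReal.ofReal_le_ofReal (mul_card_filter_le_sum hF hC hφ hlam N m x)
    _ = _ := by
        simp_rw [ENNReal.ofReal_mul hc]
        rw [lintegral_const_mul' _ _ ENNReal.ofReal_ne_top, lintegral_sum_smul hφm hφ]
        ring

lemma maximal_inequality_truncated (hF : IsFolner F)
    (hC : ∀ i, (#(shadow F i) : ℝ) ≤ C * #(F i)) (hφm : Measurable φ) (hφ : ∀ x, 0 ≤ φ x)
    (hlam : 0 < lam) (N : ℕ) :
    ENNReal.ofReal lam * μ {x | ∃ i ≤ N, lam < folnerAverage F φ i x}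
      ≤ ENNReal.ofReal (2 * (C + 2)) * ∫⁻ x, ENNReal.ofReal (φ x) ∂μ := by
  refine le_of_forall_le_ofReal_one_add_mul fun n => ?_
  obtain ⟨m, hm⟩ := (hF.eventually_card_mul_le ((Finset.range (N + 1)).biUnion F)
    (ε := 1 / (n + 1)) (by positivity)).exists
  have hFm : (#(F m) : ℝ≥0∞) ≠ 0 := by exact_mod_cast (hF.1 m).card_pos.ne'
  rw [← ENNReal.mul_le_mul_iff_right hFm (ENNReal.natCast_ne_top _)]
  calc _ ≤ _ := card_mul_maximal_measure_le hF.1 hC hφm hφ hlam N m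
    _ ≤ ENNReal.ofReal ((1 + 1 / (n + 1)) * #(F m)) * _ := by
        gcongr
        rw [← ENNReal.ofReal_natCast]
        exact ENNReal.ofReal_le_ofReal hm
    _ = _ := by
        rw [ENNReal.ofReal_mul (by positivity), ENNReal.ofReal_natCast]
        ring

theorem maximal_inequality (hF : IsFolner F) (hC : ∀ i, (#(shadow F i) : ℝ) ≤ C * #(F i))
    (hφm : Measurable φ) (hφ : ∀ x, 0 ≤ φ x) (hlam : 0 < lam) :
    ENNReal.ofReal lam * μ {x | ∃ i, lam < folnerAverage F φ i x}
      ≤ ENNReal.ofReal (2 * (C + 2)) * ∫⁻ x, ENNReal.ofReal (φ x) ∂μ := by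
  have hunion : {x | ∃ i, lam < folnerAverage F φ i x}
      = ⋃ N, {x | ∃ i ≤ N, lam < folnerAverage F φ i x} := by
    ext x
    simp only [Set.mem_ofPred_eq, Set.mem_iUnion]
    exact ⟨fun ⟨i, h⟩ => ⟨i, i, le_rfl, h⟩, fun ⟨_, i, _, h⟩ => ⟨i, h⟩⟩
  have hmono : Monotone fun N => {x | ∃ i ≤ N, lam < folnerAverage F φ i x} :=
    fun N N' hN x ⟨i, hi, hx⟩ => ⟨i, hi.trans hN, hx⟩
  rw [hunion, hmono.measure_iUnion, ENNReal.mul_iSup]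
  exact iSup_le (maximal_inequality_truncated hF hC hφm hφ hlam)

end Maximal

section Ergodicity

variable {G : Type} {X : Type*} [MeasurableSpace X] {μ : Measure X}

lemma exists_ae_eq_const_of_ae_smul_eq [SMul G X] [ErgodicSMul G X μ] {w : X → ℝ}
    (hw : Measurable w) (h : ∀ g : G, (fun x => w (g • x)) =ᵐ[μ] w) : ∃ c : ℝ, w =ᵐ[μ] fun _ => c :=
  exists_eventuallyEq_const_of_forall_separating MeasurableSet fun _U hU =>
    eventuallyConst_set.mp <| aeconst_of_forall_preimage_smul_ae_eq G (hw hU).nullMeasurableSet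
      fun g => (h g).preimage _

variable [Group G] [MulAction G X] [MeasurableConstSMul G X]

/-- An almost invariant set is almost equal to the (strictly invariant) union of its countably
many translates. -/
lemma ergodicSMul_of_forall_invariant [Countable G] [IsProbabilityMeasure μ]
    [SMulInvariantMeasure G X μ]
    (h : ∀ s, MeasurableSet s → (∀ g : G, (g • ·) ⁻¹' s = s) → μ s = 0 ∨ μ s = 1) :
    ErgodicSMul G X μ := by
  refine ⟨fun {s} hs hinv => ?_⟩
  set t := ⋃ g : G, (g • ·) ⁻¹' s
  have ht : MeasurableSet t := MeasurableSet.iUnion fun g => measurable_const_smul g hs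
  have hts : t =ᵐ[μ] s :=
    (Filter.EventuallyEq.countable_iUnion hinv).trans (Set.iUnion_const s).eventuallyEq
  have htinv : ∀ g : G, (g • ·) ⁻¹' t = t := fun g => by
    ext x
    simp only [t, Set.mem_preimage, Set.mem_iUnion, smul_smul]
    exact ⟨fun ⟨k, hk⟩ => ⟨k * g, hk⟩, fun ⟨k, hk⟩ => ⟨k * g⁻¹, by simpa using hk⟩⟩
  refine EventuallyConst.congr (eventuallyConst_set'.mpr ?_) hts
  rcases h t ht htinv with h0 | h1
  · exact Or.inl (ae_eq_empty.mpr h0)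
  · exact Or.inr (ae_eq_univ.mpr ((prob_compl_eq_zero_iff ht).mpr h1))

end Ergodicity

section MeanErgodic

variable {G : Type} {X : Type*} [Group G] [MulAction G X] [MeasurableSpace X]
  (F : ℕ → Finset G) (μ : Measure X)

noncomputable def vanishingAverages : Submodule ℝ (Lp ℝ 2 μ) where
  carrier := {v | ∃ b : X → ℝ, Measurable b ∧
    (∀ x, Tendsto (fun i => folnerAverage F b i x) atTop (𝓝 0)) ∧ v =ᵐ[μ] b}
  add_mem' := by
    rintro v w ⟨b, hb, hbt, hvb⟩ ⟨c, hc, hct, hwc⟩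
    refine ⟨fun x => b x + c x, hb.add hc, fun x => ?_, ?_⟩
    · simpa [folnerAverage_add] using (hbt x).add (hct x)
    · filter_upwards [Lp.coeFn_add v w, hvb, hwc] with x h1 h2 h3
      exact h1.trans (by rw [Pi.add_apply, h2, h3])
  zero_mem' := ⟨0, measurable_const, fun x => by simp [folnerAverage], Lp.coeFn_zero ..⟩
  smul_mem' := by
    rintro c v ⟨b, hb, hbt, hvb⟩
    refine ⟨fun x => c * b x, hb.const_mul c, fun x => ?_, ?_⟩
    · simpa [folnerAverage_const_mul] using (hbt x).const_mul c
    · filter_upwards [Lp.coeFn_smul c v, hvb] with x h1 h2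
      exact h1.trans (by rw [Pi.smul_apply, h2, smul_eq_mul])

variable {F μ} [MeasurableConstSMul G X]

lemma coboundary_mem_vanishingAverages (hF : IsFolner F) {h : X → ℝ} (hm : Measurable h)
    {M : ℝ} (hM : ∀ x, |h x| ≤ M) (s : G) {v : Lp ℝ 2 μ}
    (hv : v =ᵐ[μ] fun x => h (s • x) - h x) : v ∈ vanishingAverages F μ :=
  ⟨_, (hm.comp (measurable_const_smul s)).sub hm, tendsto_folnerAverage_coboundary hF hM s, hv⟩

lemma setIntegral_preimage_smul_of_mem_orthogonal [IsFiniteMeasure μ] (hF : IsFolner F)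
    {w : Lp ℝ 2 μ} (hw : w ∈ (vanishingAverages F μ)ᗮ) (s : G) {E : Set X}
    (hE : MeasurableSet E) :
    ∫ x in (s • ·) ⁻¹' E, w x ∂μ = ∫ x in E, w x ∂μ := by
  have hE' : MeasurableSet ((s • ·) ⁻¹' E) := measurable_const_smul s hE
  have hmem : MemLp (((s • ·) ⁻¹' E).indicator (1 : X → ℝ) - E.indicator 1) 2 μ :=
    (memLp_indicator_const 2 hE' 1 (Or.inr (measure_ne_top μ _))).sub
      (memLp_indicator_const 2 hE 1 (Or.inr (measure_ne_top μ _)))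
  have hcob : hmem.toLp _ ∈ vanishingAverages F μ := by
    refine coboundary_mem_vanishingAverages hF (measurable_one.indicator hE) (M := 1)
      (fun x => ?_) s (hmem.coeFn_toLp)
    by_cases hx : x ∈ E <;> simp [hx]
  have hw1 : Integrable w μ := (Lp.memLp w).integrable (by norm_num)
  have h0 := Submodule.inner_right_of_mem_orthogonal hcob hw
  rw [L2.inner_def] at h0
  have hpt : ∀ᵐ x ∂μ, inner ℝ (hmem.toLp _ x) (w x)
      = ((s • ·) ⁻¹' E).indicator w x - E.indicator w x := by
    filter_upwards [hmem.coeFn_toLp] with x hx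
    rw [hx]
    by_cases h1 : x ∈ (s • ·) ⁻¹' E <;> by_cases h2 : x ∈ E <;> simp [h1, h2]
  rw [integral_congr_ae hpt, integral_sub (hw1.indicator hE') (hw1.indicator hE),
    integral_indicator hE', integral_indicator hE, sub_eq_zero] at h0
  exact h0

lemma ae_smul_eq_of_mem_orthogonal [IsFiniteMeasure μ] [SMulInvariantMeasure G X μ]
    (hF : IsFolner F) {w : Lp ℝ 2 μ} (hw : w ∈ (vanishingAverages F μ)ᗮ) (s : G) :
    (fun x => w (s • x)) =ᵐ[μ] w := by
  have hw1 : Integrable w μ := (Lp.memLp w).integrable (by norm_num)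
  refine Integrable.ae_eq_of_forall_setIntegral_eq _ _
    (((measurePreserving_smul s μ).integrable_comp_emb (measurableEmbedding_const_smul s)).mpr hw1)
    hw1 fun E hE _ => ?_
  have hpre : (s • ·) ⁻¹' ((s⁻¹ • ·) ⁻¹' E) = E := by
    ext x; simp
  calc ∫ x in E, w (s • x) ∂μ = ∫ x in (s • ·) ⁻¹' ((s⁻¹ • ·) ⁻¹' E), w (s • x) ∂μ := by
        rw [hpre]
    _ = ∫ x in (s⁻¹ • ·) ⁻¹' E, w x ∂μ :=
        (measurePreserving_smul s μ).setIntegral_preimage_emb (measurableEmbedding_const_smul s) _ _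
    _ = ∫ x in E, w x ∂μ := setIntegral_preimage_smul_of_mem_orthogonal hF hw s⁻¹ hE

theorem sub_integral_mem_closure_vanishingAverages [ErgodicSMul G X μ] [IsProbabilityMeasure μ]
    (hF : IsFolner F) {f : X → ℝ} (hf : MemLp f 2 μ) :
    (hf.sub (memLp_const (∫ y, f y ∂μ))).toLp _ ∈ (vanishingAverages F μ).topologicalClosure := by
  rw [← Submodule.orthogonal_orthogonal_eq_closure, Submodule.mem_orthogonal]
  intro w hw
  obtain ⟨c, hc⟩ := exists_ae_eq_const_of_ae_smul_eq (Lp.stronglyMeasurable w).measurable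
    (ae_smul_eq_of_mem_orthogonal hF hw)
  rw [L2.inner_def, integral_congr_ae (g := fun x => c * (f x - ∫ y, f y ∂μ))]
  · rw [integral_const_mul, integral_sub (hf.integrable one_le_two) (integrable_const _)]
    simp
  · filter_upwards [hc, MemLp.coeFn_toLp (hf.sub (memLp_const (∫ y, f y ∂μ)))] with x h1 h2
    simp [h1, h2, mul_comm]

theorem exists_eLpNorm_sub_lt [ErgodicSMul G X μ] [IsProbabilityMeasure μ] (hF : IsFolner F)
    {f : X → ℝ} (hf : MemLp f 2 μ) {δ : ℝ} (hδ : 0 < δ) :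
    ∃ b : X → ℝ, Measurable b ∧ (∀ x, Tendsto (fun i => folnerAverage F b i x) atTop (𝓝 0)) ∧
      eLpNorm (fun x => f x - ∫ y, f y ∂μ - b x) 1 μ < ENNReal.ofReal δ := by
  set u := (hf.sub (memLp_const (∫ y, f y ∂μ))).toLp _
  have hu := sub_integral_mem_closure_vanishingAverages hF hf
  rw [← SetLike.mem_coe, Submodule.topologicalClosure_coe] at hu
  obtain ⟨v, ⟨b, hb, hbt, hvb⟩, hdist⟩ := Metric.mem_closure_iff.mp hu δ hδ
  refine ⟨b, hb, hbt, ?_⟩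
  have hae : (fun x => f x - ∫ y, f y ∂μ - b x) =ᵐ[μ] ⇑(u - v) := by
    filter_upwards [Lp.coeFn_sub u v, MemLp.coeFn_toLp (hf.sub (memLp_const (∫ y, f y ∂μ))), hvb]
      with x h1 h2 h3
    rw [h1, Pi.sub_apply, h2, h3]
    rfl
  calc eLpNorm (fun x => f x - ∫ y, f y ∂μ - b x) 1 μ
      ≤ eLpNorm (fun x => f x - ∫ y, f y ∂μ - b x) 2 μ :=
        eLpNorm_le_eLpNorm_of_exponent_le one_le_two
          ((hf.1.sub aestronglyMeasurable_const).sub hb.aestronglyMeasurable)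
    _ = ENNReal.ofReal (dist u v) := by
        rw [eLpNorm_congr_ae hae, dist_eq_norm, Lp.norm_def,
          ENNReal.ofReal_toReal (Lp.eLpNorm_ne_top _)]
    _ < ENNReal.ofReal δ := (ENNReal.ofReal_lt_ofReal_iff hδ).mpr hdist

end MeanErgodic

section Pointwise

variable {G : Type} {X : Type*} [Group G] [MulAction G X] {F : ℕ → Finset G}

lemma exists_lt_folnerAverage_abs_sub (hF : ∀ i, (F i).Nonempty) {f b : X → ℝ} {c lam : ℝ}
    {x : X} (hlam : 0 < lam) (hb : Tendsto (fun i => folnerAverage F b i x) atTop (𝓝 0))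
    (hx : ∃ᶠ i in atTop, 2 * lam < |folnerAverage F f i x - c|) :
    ∃ i, lam < folnerAverage F (fun y => |f y - c - b y|) i x := by
  obtain ⟨i, hfi, hbi⟩ := (hx.and_eventually (hb.abs.eventually (gt_mem_nhds (by simpa)))).exists
  refine ⟨i, lt_of_lt_of_le ?_ abs_folnerAverage_le⟩
  rw [folnerAverage_sub, folnerAverage_sub, folnerAverage_const (hF i)]
  have := abs_sub_abs_le_abs_sub (folnerAverage F f i x - c) (folnerAverage F b i x)
  linarith

lemma eq_zero_of_forall_le_mul_ofReal {a K : ℝ≥0∞} (hK : K ≠ ⊤)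
    (h : ∀ δ : ℝ, 0 < δ → a ≤ K * ENNReal.ofReal δ) : a = 0 := by
  have hlim : Tendsto (fun n : ℕ => K * ENNReal.ofReal (1 / (n + 1))) atTop (𝓝 0) := by
    simpa using ENNReal.Tendsto.const_mul
      (ENNReal.tendsto_ofReal tendsto_one_div_add_atTop_nhds_zero_nat) (Or.inr hK)
  exact le_antisymm (ge_of_tendsto' hlim fun n => h _ (by positivity)) bot_le

variable [MeasurableSpace X] [MeasurableConstSMul G X] {μ : Measure X} [ErgodicSMul G X μ]
  [IsProbabilityMeasure μ] {C : ℝ} {f : X → ℝ}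

lemma ae_eventually_abs_folnerAverage_sub_le (hF : IsFolner F)
    (hC : ∀ i, (#(shadow F i) : ℝ) ≤ C * #(F i)) (hfm : Measurable f) (hf : MemLp f 2 μ)
    {lam : ℝ} (hlam : 0 < lam) :
    ∀ᵐ x ∂μ, ∀ᶠ i in atTop, |folnerAverage F f i x - ∫ y, f y ∂μ| ≤ 2 * lam := by
  set c := ∫ y, f y ∂μ
  simp only [ae_iff, not_eventually, not_le]
  suffices h : ENNReal.ofReal lam * μ {x | ∃ᶠ i in atTop, 2 * lam < |folnerAverage F f i x - c|}
      = 0 by simpa [not_le.mpr hlam] using h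
  refine eq_zero_of_forall_le_mul_ofReal (ENNReal.ofReal_ne_top (r := 2 * (C + 2))) fun δ hδ => ?_
  obtain ⟨b, hb, hbt, hr⟩ := exists_eLpNorm_sub_lt hF hf hδ
  have hsub : {x | ∃ᶠ i in atTop, 2 * lam < |folnerAverage F f i x - c|}
      ⊆ {x | ∃ i, lam < folnerAverage F (fun y => |f y - c - b y|) i x} :=
    fun x hx => exists_lt_folnerAverage_abs_sub hF.1 hlam (hbt x) hx
  calc ENNReal.ofReal lam * μ {x | ∃ᶠ i in atTop, 2 * lam < |folnerAverage F f i x - c|}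
      ≤ ENNReal.ofReal lam * μ {x | ∃ i, lam < folnerAverage F (fun y => |f y - c - b y|) i x} := by
        gcongr
    _ ≤ ENNReal.ofReal (2 * (C + 2)) * ∫⁻ x, ENNReal.ofReal |f x - c - b x| ∂μ :=
        maximal_inequality hF hC ((hfm.sub measurable_const).sub hb).abs
          (fun _ => abs_nonneg _) hlam
    _ ≤ ENNReal.ofReal (2 * (C + 2)) * ENNReal.ofReal δ := by
        rw [eLpNorm_one_eq_lintegral_enorm] at hr
        simp_rw [Real.enorm_eq_ofReal_abs] at hr
        gcongr

theorem ae_tendsto_folnerAverage (hF : IsFolner F) (htemp : Tempered F) (hfm : Measurable f)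
    (hf : MemLp f 2 μ) :
    ∀ᵐ x ∂μ, Tendsto (fun i => folnerAverage F f i x) atTop (𝓝 (∫ y, f y ∂μ)) := by
  obtain ⟨C, -, hC⟩ := htemp
  have h := ae_all_iff.mpr fun n : ℕ =>
    ae_eventually_abs_folnerAverage_sub_le hF hC hfm hf (lam := 1 / (n + 1)) (by positivity)
  filter_upwards [h] with x hx
  rw [Metric.tendsto_atTop]
  intro ε hε
  obtain ⟨n, hn⟩ := exists_nat_one_div_lt (half_pos hε)
  obtain ⟨N, hN⟩ := eventually_atTop.mp (hx n)
  exact ⟨N, fun i hi => by rw [Real.dist_eq]; linarith [hN i hi]⟩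

end Pointwise

section Shift

variable {G A B : Type}

lemma measurableSet_apply_eq (g : G) (a : A) : MeasurableSet[prodisBorel G A] {z | z g = a} := by
  let _ : TopologicalSpace A := ⊥
  have : DiscreteTopology A := ⟨rfl⟩
  exact MeasurableSpace.measurableSet_generateFrom
    ((continuous_apply (A := fun _ : G => A) g).isOpen_preimage {a} (isOpen_discrete _))

lemma measurableSet_apply_ne_apply [Countable A] {π' π'' : (G → B) → (G → A)}
    (h' : Measurable[prodisBorel G B, prodisBorel G A] π')
    (h'' : Measurable[prodisBorel G B, prodisBorel G A] π'') (g : G) :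
    MeasurableSet[prodisBorel G B] {z | π' z g ≠ π'' z g} := by
  have : {z | π' z g ≠ π'' z g} = ⋃ a : A, π' ⁻¹' {x | x g = a} \ π'' ⁻¹' {x | x g = a} := by
    ext z; simp [eq_comm]
  rw [this]
  exact MeasurableSet.iUnion fun a =>
    (h' (measurableSet_apply_eq g a)).diff (h'' (measurableSet_apply_eq g a))

variable [Group G]

/-- The shift as a left action. Not an instance: when `A` carries a `G`-action it would clash
with the pointwise action on `G → A`. -/
abbrev shiftAction : MulAction G (G → A) where
  smul := shift
  one_smul x := funext fun h => congrArg x (mul_one h)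
  mul_smul g g' x := funext fun h => congrArg x (mul_assoc h g g').symm

lemma measurable_shift (g : G) : Measurable[prodisBorel G A, prodisBorel G A] (shift g) := by
  let _ : TopologicalSpace A := ⊥
  let _ : MeasurableSpace (G → A) := prodisBorel G A
  have : BorelSpace (G → A) := ⟨rfl⟩
  exact (continuous_pi fun h => continuous_apply (h * g)).measurable

lemma card_filter_ne_eq_sum_indicator {π' π'' : (G → B) → (G → A)}
    (hequi' : ∀ (g : G) (y : G → B), π' (shift g y) = shift g (π' y))
    (hequi'' : ∀ (g : G) (y : G → B), π'' (shift g y) = shift g (π'' y)) (D : Finset G)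
    (y : G → B) :
    (#{g ∈ D | π' y g ≠ π'' y g} : ℝ)
      = ∑ g ∈ D, {z | π' z 1 ≠ π'' z 1}.indicator 1 (shift g y) := by
  rw [Finset.natCast_card_filter]
  simp [Set.indicator_apply, hequi', hequi'', shift]

end Shift

theorem statement14_general {G A B : Type} [Group G] [Countable G] [Fintype A]
    (F : ℕ → Finset G) (hF : IsFolner F) (htemp : Tempered F)
    (μ : @Measure (G → B) (prodisBorel G B)) (hμ1 : μ Set.univ = 1)
    (hinv : ∀ g : G, @Measure.map _ _ (prodisBorel G B) (prodisBorel G B) (shift g) μ = μ)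
    (herg : ∀ s : Set (G → B), @MeasurableSet _ (prodisBorel G B) s →
      (∀ g : G, shift g ⁻¹' s = s) → μ s = 0 ∨ μ s = 1)
    (π' π'' : (G → B) → (G → A))
    (hmeas' : @Measurable _ _ (prodisBorel G B) (prodisBorel G A) π')
    (hmeas'' : @Measurable _ _ (prodisBorel G B) (prodisBorel G A) π'')
    (hequi' : ∀ (g : G) (y : G → B), π' (shift g y) = shift g (π' y))
    (hequi'' : ∀ (g : G) (y : G → B), π'' (shift g y) = shift g (π'' y)) :
    μ {y : G → B |
        ¬ (Tendsto
            (fun i => ((((F i).filter fun g => π' y g ≠ π'' y g)).card : ℝ) / ((F i).card : ℝ))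
            atTop (nhds (μ {z : G → B | π' z 1 ≠ π'' z 1}).toReal) ∧
          limsup
            (fun i => ((((F i).filter fun g => π' y g ≠ π'' y g)).card : ℝ) / ((F i).card : ℝ))
            atTop = (μ {z : G → B | π' z 1 ≠ π'' z 1}).toReal)} = 0 := by
  let _ : MeasurableSpace (G → B) := prodisBorel G B
  let _ : MulAction G (G → B) := shiftAction
  have : IsProbabilityMeasure μ := ⟨hμ1⟩
  have : MeasurableConstSMul G (G → B) := ⟨measurable_shift⟩
  have : SMulInvariantMeasure G (G → B) μ :=
    ⟨fun g s hs => by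
      change μ (shift g ⁻¹' s) = μ s
      rw [← Measure.map_apply (measurable_shift g) hs, hinv g]⟩
  have : ErgodicSMul G (G → B) μ := ergodicSMul_of_forall_invariant herg
  have hW := measurableSet_apply_ne_apply hmeas' hmeas'' 1
  have h := ae_tendsto_folnerAverage hF htemp (measurable_one.indicator hW)
    (memLp_indicator_const 2 hW 1 (Or.inr (measure_ne_top μ _)))
  rw [integral_indicator_one hW, measureReal_def] at h
  rw [← ae_iff]
  filter_upwards [h] with y hy
  simp_rw [card_filter_ne_eq_sum_indicator hequi' hequi'']
  exact ⟨hy, hy.limsup_eq⟩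

/-- Let `π', π''` be two measurable equivariant maps `B^G → A^G`, `μ`
an ergodic shift-invariant Borel probability measure on `B^G`, `W` the set where the
generator maps of `π'` and `π''` differ, and `(F_i)` a tempered Følner sequence. Then for
`μ`-a.e. `y`, the empirical frequency of disagreement of `π'(y)` and `π''(y)` on `F_i`
converges to `μ(W)`; in particular the asymptotic Hamming distance (a `limsup`) equals
`μ(W)`. -/
theorem statement14 {G A B : Type} [Group G] [Countable G] [Fintype A] [Fintype B]
    (F : ℕ → Finset G) (hF : IsFolner F) (htemp : Tempered F)
    (μ : @Measure (G → B) (prodisBorel G B)) (hμ1 : μ Set.univ = 1)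
    (hinv : ∀ g : G, @Measure.map _ _ (prodisBorel G B) (prodisBorel G B) (shift g) μ = μ)
    (herg : ∀ s : Set (G → B), @MeasurableSet _ (prodisBorel G B) s →
      (∀ g : G, shift g ⁻¹' s = s) → μ s = 0 ∨ μ s = 1)
    (π' π'' : (G → B) → (G → A))
    (hmeas' : @Measurable _ _ (prodisBorel G B) (prodisBorel G A) π')
    (hmeas'' : @Measurable _ _ (prodisBorel G B) (prodisBorel G A) π'')
    (hequi' : ∀ (g : G) (y : G → B), π' (shift g y) = shift g (π' y))
    (hequi'' : ∀ (g : G) (y : G → B), π'' (shift g y) = shift g (π'' y)) :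
    μ {y : G → B |
        ¬ (Tendsto
            (fun i => ((((F i).filter fun g => π' y g ≠ π'' y g)).card : ℝ) / ((F i).card : ℝ))
            atTop (nhds (μ {z : G → B | π' z 1 ≠ π'' z 1}).toReal) ∧
          limsup
            (fun i => ((((F i).filter fun g => π' y g ≠ π'' y g)).card : ℝ) / ((F i).card : ℝ))
            atTop = (μ {z : G → B | π' z 1 ≠ π'' z 1}).toReal)} = 0 :=
  statement14_general F hF htemp μ hμ1 hinv herg π' π'' hmeas' hmeas'' hequi' hequi''

end Brudno
end
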